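/- For a ∈ [−1, 0] and every n ≥ 1, all coefficients of the elephant polynomial R_n are nonnegative. -/

import Mathlib

/-!
Writing `R_{n+1} = X R_n - b (1 - X²) R_n'` with `b = a/n`, the coefficients `r_k` of `R_n` satisfy
`[X^(k+1)] R_{n+1} = (1 + b k) r_k - b (k+2) r_{k+2}` and `[X^0] R_{n+1} = -b r_1`.
Since `-1/n ≤ b ≤ 0`, every factor is nonnegative as long as `k ≤ n`, and for `k > n` the term
`r_k` vanishes because `deg R_n ≤ n`; so nonnegativity propagates by induction.
-/

open Polynomial

/-- The elephant polynomials: `R a 1 = X` and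
`R a (n+1) = X * R a n - (a/n) * (1 - X^2) * (R a n)'` for `n ≥ 1`. -/
noncomputable def elephantR (a : ℝ) : ℕ → Polynomial ℝ
  | 0 => 1
  | 1 => X
  | n + 2 => X * elephantR a (n + 1) -
      C (a / ((n : ℝ) + 1)) * ((1 - X ^ 2) * (elephantR a (n + 1)).derivative)

namespace Polynomial

variable {R : Type*}

section CommRing

variable [CommRing R]

noncomputable def elephantStep (b : R) (p : R[X]) : R[X] :=
  X * p - C b * ((1 - X ^ 2) * derivative p)

theorem coeff_elephantStep_zero (b : R) (p : R[X]) :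
    (elephantStep b p).coeff 0 = -b * p.coeff 1 := by
  simp [elephantStep, sub_mul, mul_sub, coeff_derivative, mul_coeff_zero]

theorem coeff_elephantStep_succ (b : R) (p : R[X]) (k : ℕ) :
    (elephantStep b p).coeff (k + 1) =
      (1 + b * k) * p.coeff k - b * (k + 2) * p.coeff (k + 2) := by
  rcases k with _ | k
  · simp only [elephantStep, sub_mul, one_mul, mul_sub, zero_add, coeff_sub, coeff_X_mul,
      coeff_C_mul, coeff_derivative, Nat.reduceAdd, Nat.cast_one, coeff_X_pow_mul',
      Nat.not_ofNat_le_one, ↓reduceIte, mul_zero, sub_zero, Nat.cast_zero, add_zero, sub_right_inj]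
    ring
  · simp only [elephantStep, sub_mul, one_mul, mul_sub, coeff_sub, coeff_X_mul, coeff_C_mul,
      coeff_derivative, Nat.cast_add, Nat.cast_one, coeff_X_pow_mul', le_add_iff_nonneg_left,
      zero_le, ↓reduceIte, Nat.reduceSubDiff]
    ring

theorem natDegree_elephantStep_le (b : R) (p : R[X]) :
    (elephantStep b p).natDegree ≤ p.natDegree + 1 := by
  refine natDegree_le_iff_coeff_eq_zero.2 fun m hm => ?_
  obtain ⟨k, rfl⟩ : ∃ k, m = k + 1 := Nat.exists_eq_succ_of_ne_zero (by omega)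
  rw [coeff_elephantStep_succ, coeff_eq_zero_of_natDegree_lt (by omega : p.natDegree < k),
    coeff_eq_zero_of_natDegree_lt (by omega : p.natDegree < k + 2)]
  ring

end CommRing

theorem coeff_elephantStep_nonneg [CommRing R] [LinearOrder R] [IsStrictOrderedRing R]
    {b : R} {p : R[X]} {n : ℕ} (hb : b ≤ 0) (hbn : 0 ≤ 1 + b * n) (hdeg : p.natDegree ≤ n)
    (hp : ∀ k, 0 ≤ p.coeff k) (k : ℕ) : 0 ≤ (elephantStep b p).coeff k := by
  have hb' : 0 ≤ -b := neg_nonneg.2 hb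
  rcases k with _ | k
  · rw [coeff_elephantStep_zero]
    exact mul_nonneg hb' (hp 1)
  rw [coeff_elephantStep_succ, sub_eq_add_neg, ← neg_mul, ← neg_mul]
  refine add_nonneg ?_ (mul_nonneg (mul_nonneg hb' (by positivity)) (hp _))
  rcases le_or_gt k n with hk | hk
  · have : b * n ≤ b * k := mul_le_mul_of_nonpos_left (by exact_mod_cast hk) hb
    exact mul_nonneg (by linarith) (hp k)
  · simp [coeff_eq_zero_of_natDegree_lt (hdeg.trans_lt hk)]

end Polynomial

theorem elephantR_succ_succ (a : ℝ) (n : ℕ) :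
    elephantR a (n + 2) = elephantStep (a / (n + 1)) (elephantR a (n + 1)) := rfl

theorem natDegree_elephantR_le (a : ℝ) (n : ℕ) : (elephantR a n).natDegree ≤ n := by
  induction n using elephantR.induct with
  | case1 => simp [elephantR]
  | case2 => exact natDegree_X_le
  | case3 n ih =>
    rw [elephantR_succ_succ]
    exact (natDegree_elephantStep_le _ _).trans (by omega)

theorem stmt_11 (a : ℝ) (ha : a ∈ Set.Icc (-1 : ℝ) 0) (n : ℕ) (k : ℕ) :
    0 ≤ (elephantR a n).coeff k := by
  obtain ⟨ha1, ha0⟩ := ha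
  induction n using elephantR.induct generalizing k with
  | case1 =>
    rw [elephantR, coeff_one]
    exact ite_nonneg zero_le_one le_rfl
  | case2 =>
    rw [elephantR, coeff_X]
    exact ite_nonneg zero_le_one le_rfl
  | case3 n ih =>
    have hn : (0 : ℝ) < n + 1 := by positivity
    rw [elephantR_succ_succ]
    refine coeff_elephantStep_nonneg (div_nonpos_of_nonpos_of_nonneg ha0 hn.le) ?_
      (natDegree_elephantR_le a (n + 1)) ih k
    rw [Nat.cast_succ, div_mul_cancel₀ a hn.ne']
    linarith
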